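/- Let L be a finite lattice of height 3. Then L is isomorphic to the lattice of flats of some boolean representable finite simplicial complex if and only if L is atomistic and the graph Γ_L has no supercliques. -/

import Mathlib

universe u v

/-- `F ⊆ V` is a flat of the simplicial complex `(V, H)`: for every `I ∈ H` with
`I ⊆ F` and every `p ∈ V \ F`, `I ∪ {p} ∈ H`. -/
def IsCFlat {α : Type u} (V : Set α) (H : Set (Set α)) (F : Set α) : Prop :=
  F ⊆ V ∧ ∀ I ∈ H, I ⊆ F → ∀ p ∈ V \ F, insert p I ∈ H

/-- `(V, H)` is a finite simplicial complex: `V` is finite and nonempty, and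
`H ⊆ 2^V` is nonempty and closed under taking subsets. -/
def IsCpx {α : Type u} (V : Set α) (H : Set (Set α)) : Prop :=
  V.Finite ∧ V.Nonempty ∧ H.Nonempty ∧ (∀ X ∈ H, X ⊆ V) ∧ ∀ X ∈ H, ∀ Y ⊆ X, Y ∈ H

/-- `X` is a transversal of the successive differences for some chain
`F 0 ⊂ F 1 ⊂ … ⊂ F k` of flats of `(V, H)`: `X` admits an enumeration
`x 0, …, x (k-1)` with `x i ∈ F (i+1) \ F i`. -/
def TransvSD {α : Type u} (V : Set α) (H : Set (Set α)) (X : Set α) : Prop :=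
  ∃ (k : ℕ) (F : Fin (k + 1) → Set α) (x : Fin k → α),
    (∀ i, IsCFlat V H (F i)) ∧ StrictMono F ∧
    Function.Injective x ∧ X = Set.range x ∧
    ∀ i : Fin k, x i ∈ F i.succ \ F i.castSucc

/-- `(V, H)` is boolean representable: every `X ∈ H` is a transversal of the
successive differences for some chain of flats of `(V, H)`. -/
def BoolRep {α : Type u} (V : Set α) (H : Set (Set α)) : Prop :=
  ∀ X ∈ H, TransvSD V H X

/-- `xξ` : the set of atoms of `L` lying below `x`. -/
def latxi (L : Type u) [Lattice L] [OrderBot L] (x : L) : Set L :=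
  {a | IsAtom a ∧ a ≤ x}

/-- `T_L` : the set of transversals of chains in `L`, i.e. sets of atoms `A`
admitting an enumeration `e 0, …, e (m-1)` and a chain `c 0 < … < c m` in `L`
with `e i ∈ (c (i+1))ξ \ (c i)ξ`. -/
def TLat (L : Type u) [Lattice L] [OrderBot L] : Set (Set L) :=
  {A | ∃ (m : ℕ) (c : Fin (m + 1) → L) (e : Fin m → L), StrictMono c ∧
      Function.Injective e ∧ A = Set.range e ∧
      ∀ i : Fin m, e i ∈ latxi L (c i.succ) \ latxi L (c i.castSucc)}

/-- A lattice is atomistic if every element is a join of atoms. -/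
def AtomisticLat (L : Type u) [Lattice L] [OrderBot L] : Prop :=
  ∀ x : L, ∃ s : Finset L, (∀ a ∈ s, IsAtom a) ∧ x = s.sup id

/-- The height of `L` is `n`: there is a chain `x_0 < … < x_n` and no longer chain. -/
def hasHeight (L : Type u) [Preorder L] (n : ℕ) : Prop :=
  (∃ c : Fin (n + 1) → L, StrictMono c) ∧
    ∀ (m : ℕ) (c : Fin (m + 1) → L), StrictMono c → m ≤ n

/-- Adjacency in the graph `Γ_L`: distinct atoms `a, b` with `a ∨ b = ⊤`. -/
def AdjL (L : Type u) [Lattice L] [BoundedOrder L] (a b : L) : Prop :=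
  IsAtom a ∧ IsAtom b ∧ a ≠ b ∧ a ⊔ b = ⊤

/-- `W` is a superclique of `Γ_L`: a clique of at least two atoms such that for
all distinct `a, b ∈ W`, every vertex `c ∉ W` is not adjacent to `a` or not
adjacent to `b`. -/
def IsSuperclique (L : Type u) [Lattice L] [BoundedOrder L] (W : Set L) : Prop :=
  W ⊆ {a : L | IsAtom a} ∧ 2 ≤ W.ncard ∧
    (∀ a ∈ W, ∀ b ∈ W, a ≠ b → AdjL L a b) ∧
    ∀ a ∈ W, ∀ b ∈ W, a ≠ b → ∀ c ∈ {x : L | IsAtom x} \ W,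
      ¬ AdjL L c a ∨ ¬ AdjL L c b

/-!
Backward direction: take the atoms of `L` as vertices and the transversals `TLat L` of chains as
faces. A transversal inside `latxi x` can be cut down below `x` and then extended by any atom not
below `x`, so every `latxi x` is a flat; when `L` is atomistic, `latxi` is an order embedding and
boolean representability follows. Height 3 bounds faces to three atoms, so a flat `F` lies in
`latxi (x ⊔ y)` for all distinct `x, y ∈ F`: it is either some `latxi x` or a superclique.

Forward direction: in a boolean representable complex the closure of a point outside the least
flat corresponds to an atom of `L`, so `L` is atomistic. For a superclique `W` the union of the
flats corresponding to `w ∈ W` is again a flat (the superclique condition handles the two-point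
faces); it contains two adjacent atoms, hence every point, which is impossible since some atom
lies outside `W`.
-/

section Transversals

variable {L : Type u} [Lattice L] [OrderBot L]

theorem latxi_mono {x y : L} (h : x ≤ y) : latxi L x ⊆ latxi L y :=
  fun _ ha => ⟨ha.1, ha.2.trans h⟩

theorem latxi_bot : latxi L ⊥ = ∅ :=
  Set.eq_empty_of_forall_notMem fun _ ha => ha.1.1 (le_bot_iff.mp ha.2)

theorem latxi_of_isAtom {a : L} (ha : IsAtom a) : latxi L a = {a} :=
  Set.ext fun _ => ⟨fun hb => (ha.le_iff_eq hb.1.1).mp hb.2, by rintro rfl; exact ⟨ha, le_rfl⟩⟩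

theorem TLat_subset_atoms {X : Set L} (hX : X ∈ TLat L) : X ⊆ {a | IsAtom a} := by
  obtain ⟨m, c, e, -, -, rfl, he⟩ := hX
  rintro _ ⟨i, rfl⟩
  exact (he i).1.1

theorem range_mem_TLat {m : ℕ} {c : Fin (m + 1) → L} (hc : Monotone c) {e : Fin m → L}
    (he : ∀ i, e i ∈ latxi L (c i.succ) \ latxi L (c i.castSucc)) : Set.range e ∈ TLat L := by
  have hne : ∀ i j, i < j → e i ≠ e j := fun i j hij heq =>
    (he j).2 ⟨(he j).1.1, heq ▸ (he i).1.2.trans (hc (Fin.succ_le_castSucc_iff.mpr hij))⟩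
  refine ⟨m, c, e, Fin.strictMono_iff_lt_succ.mpr fun i => ?_, fun i j hij => ?_, rfl, he⟩
  · exact (hc (Fin.castSucc_le_succ i)).lt_of_ne fun h => (he i).2 (h ▸ (he i).1)
  · by_contra hij'
    rcases lt_or_gt_of_ne hij' with h | h
    exacts [hne i j h hij, hne j i h hij.symm]

theorem empty_mem_TLat : (∅ : Set L) ∈ TLat L := by
  simpa using range_mem_TLat (c := fun _ : Fin 1 => (⊥ : L)) monotone_const (e := Fin.elim0)
    (fun i => i.elim0)

/-- Meeting the chain with `x` and then climbing to `x ⊔ p` appends `p` to the transversal. -/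
theorem insert_mem_TLat {X : Set L} (hX : X ∈ TLat L) {x p : L} (hXx : X ⊆ latxi L x)
    (hp : IsAtom p) (hpx : ¬ p ≤ x) : insert p X ∈ TLat L := by
  obtain ⟨m, c, e, hc, -, rfl, he⟩ := hX
  rw [← Fin.range_snoc]
  refine range_mem_TLat (c := Fin.snoc (fun i => c i ⊓ x) (x ⊔ p)) ?_ fun i => ?_
  · refine Fin.monotone_iff_le_succ.mpr fun i => ?_
    induction i using Fin.lastCases with
    | last => simp
    | cast j =>
      rw [Fin.succ_castSucc, Fin.snoc_castSucc, Fin.snoc_castSucc]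
      exact inf_le_inf_right x (hc.monotone (Fin.castSucc_le_succ j))
  · induction i using Fin.lastCases with
    | last => simpa [latxi, hp] using fun _ h => hpx h
    | cast j =>
      simp only [Fin.snoc_castSucc, Fin.succ_castSucc]
      exact ⟨⟨(he j).1.1, le_inf (he j).1.2 (hXx ⟨j, rfl⟩).2⟩,
        fun h => (he j).2 ⟨h.1, h.2.trans inf_le_left⟩⟩

theorem isCFlat_latxi (x : L) : IsCFlat {a : L | IsAtom a} (TLat L) (latxi L x) :=
  ⟨fun _ ha => ha.1, fun _ hI hIx _ hp => insert_mem_TLat hI hIx hp.1 fun h => hp.2 ⟨hp.1, h⟩⟩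

theorem pair_mem_TLat {a b : L} (ha : IsAtom a) (hb : IsAtom b) (hab : a ≠ b) :
    ({a, b} : Set L) ∈ TLat L := by
  have hb' : ({b} : Set L) ∈ TLat L := by
    simpa using insert_mem_TLat empty_mem_TLat (Set.empty_subset (latxi L ⊥)) hb
      fun h => hb.1 (le_bot_iff.mp h)
  exact insert_mem_TLat hb' (Set.singleton_subset_iff.mpr ⟨hb, le_rfl⟩) ha
    fun h => hab ((hb.le_iff_eq ha.1).mp h)

/-- Walk up the chain, keeping the part of `Y` collected so far below the current term. -/
theorem mem_TLat_of_subset {X Y : Set L} (hX : X ∈ TLat L) (hYX : Y ⊆ X) : Y ∈ TLat L := by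
  obtain ⟨m, c, e, hc, -, rfl, he⟩ := hX
  have key : ∀ j : Fin (m + 1), Y ∩ e '' {i | i.castSucc < j} ∈ TLat L ∧
      Y ∩ e '' {i | i.castSucc < j} ⊆ latxi L (c j) := by
    intro j
    induction j using Fin.induction with
    | zero => simp [empty_mem_TLat]
    | succ i ih =>
      have hstep : latxi L (c i.castSucc) ⊆ latxi L (c i.succ) :=
        latxi_mono (hc.monotone (Fin.castSucc_le_succ i))
      have hI : {k : Fin m | k.castSucc < i.succ} = insert i {k | k.castSucc < i.castSucc} := by
        ext k
        simp [le_iff_lt_or_eq, or_comm]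
      rw [hI, Set.image_insert_eq]
      by_cases hi : e i ∈ Y
      · rw [Set.inter_insert_of_mem hi]
        exact ⟨insert_mem_TLat ih.1 ih.2 (he i).1.1 fun h => (he i).2 ⟨(he i).1.1, h⟩,
          Set.insert_subset (he i).1 (ih.2.trans hstep)⟩
      · rw [Set.inter_insert_of_notMem hi]
        exact ⟨ih.1, ih.2.trans hstep⟩
  simpa [Set.inter_eq_left.mpr hYX, Fin.castSucc_lt_last] using (key (Fin.last m)).1

theorem latxi_subset_latxi_iff (hat : AtomisticLat L) {x y : L} :
    latxi L x ⊆ latxi L y ↔ x ≤ y := by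
  refine ⟨fun h => ?_, latxi_mono⟩
  obtain ⟨s, hs, rfl⟩ := hat x
  exact Finset.sup_le fun a ha => (h ⟨hs a ha, Finset.le_sup (f := id) ha⟩).2

theorem boolRep_TLat (hat : AtomisticLat L) : BoolRep {a : L | IsAtom a} (TLat L) := by
  rintro X ⟨m, c, e, hc, he, rfl, hmem⟩
  have hmono : StrictMono (latxi L) := Monotone.strictMono_of_injective
    (fun _ _ => latxi_mono) fun x y h => le_antisymm
      ((latxi_subset_latxi_iff hat).mp h.le) ((latxi_subset_latxi_iff hat).mp h.ge)
  exact ⟨m, latxi L ∘ c, e, fun i => isCFlat_latxi _, hmono.comp hc, he, rfl, hmem⟩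

end Transversals

section HeightThree

variable {L : Type u} [Lattice L] [BoundedOrder L]

theorem ncard_le_three_of_mem_TLat (hh : hasHeight L 3) {X : Set L} (hX : X ∈ TLat L) :
    X.ncard ≤ 3 := by
  obtain ⟨m, c, e, hc, he, rfl, -⟩ := hX
  rw [Set.ncard_range_of_injective he, Nat.card_eq_fintype_card, Fintype.card_fin]
  exact hh.2 m c hc

theorem ncard_le_two_of_insert_mem_TLat [Finite L] (hh : hasHeight L 3) {X : Set L} {p : L}
    (hX : insert p X ∈ TLat L) (hp : p ∉ X) : X.ncard ≤ 2 := by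
  have := ncard_le_three_of_mem_TLat hh hX
  rw [Set.ncard_insert_of_notMem hp] at this
  omega

theorem ncard_le_two_of_subset_latxi [Finite L] (hh : hasHeight L 3) (hat : AtomisticLat L)
    {X : Set L} (hX : X ∈ TLat L) {x : L} (hXx : X ⊆ latxi L x) (hx : x ≠ ⊤) :
    X.ncard ≤ 2 := by
  obtain ⟨p, hp, hpx⟩ : ∃ p, IsAtom p ∧ ¬ p ≤ x := by
    obtain ⟨s, hs, htop⟩ := hat ⊤
    by_contra! h
    exact hx (top_le_iff.mp (htop ▸ Finset.sup_le fun a ha => h a (hs a ha)))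
  exact ncard_le_two_of_insert_mem_TLat hh (insert_mem_TLat hX hXx hp hpx)
    fun h => hpx (hXx h).2

theorem exists_sup_ne_top_of_mem_TLat {X : Set L} (hX : X ∈ TLat L)
    (h3 : 3 ≤ X.ncard) : ∃ a ∈ X, ∃ b ∈ X, a ≠ b ∧ a ⊔ b ≠ ⊤ := by
  obtain ⟨m, c, e, hc, he, rfl, hmem⟩ := hX
  rw [Set.ncard_range_of_injective he, Nat.card_eq_fintype_card, Fintype.card_fin] at h3
  have hle : ∀ i : Fin m, i.val < 2 → e i ≤ c ⟨2, by omega⟩ := fun i hi =>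
    (hmem i).1.2.trans (hc.monotone (by simp [Fin.le_def]; omega))
  refine ⟨e ⟨0, by omega⟩, ⟨_, rfl⟩, e ⟨1, by omega⟩, ⟨_, rfl⟩, he.ne (by simp), fun htop => ?_⟩
  have h23 : c ⟨2, by omega⟩ < c ⟨3, by omega⟩ := hc (by simp [Fin.lt_def])
  exact h23.not_ge (top_le_iff.mp (htop ▸ sup_le (hle _ (by simp)) (hle _ (by simp))) ▸ le_top)

variable [Finite L]

theorem ncard_le_two_of_subset_isCFlat (hh : hasHeight L 3) {F : Set L}
    (hF : IsCFlat {a : L | IsAtom a} (TLat L) F) (hFV : F ≠ {a : L | IsAtom a}) {X : Set L}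
    (hX : X ∈ TLat L) (hXF : X ⊆ F) : X.ncard ≤ 2 := by
  obtain ⟨p, hp, hpF⟩ := Set.exists_of_ssubset (hF.1.ssubset_of_ne hFV)
  exact ncard_le_two_of_insert_mem_TLat hh (hF.2 X hX hXF p ⟨hp, hpF⟩) fun h => hpF (hXF h)

theorem subset_latxi_sup_of_isCFlat (hh : hasHeight L 3) {F : Set L}
    (hF : IsCFlat {a : L | IsAtom a} (TLat L) F) (hFV : F ≠ {a : L | IsAtom a})
    {x y : L} (hx : x ∈ F) (hy : y ∈ F) (hxy : x ≠ y) : F ⊆ latxi L (x ⊔ y) := by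
  intro z hz
  refine ⟨hF.1 hz, by_contra fun hzxy => ?_⟩
  have hxyz : insert z {x, y} ∈ TLat L := insert_mem_TLat (pair_mem_TLat (hF.1 hx) (hF.1 hy) hxy)
    (Set.pair_subset ⟨hF.1 hx, le_sup_left⟩ ⟨hF.1 hy, le_sup_right⟩) (hF.1 hz) hzxy
  have hzx : z ≠ x := fun h => hzxy (h ▸ le_sup_left)
  have hzy : z ≠ y := fun h => hzxy (h ▸ le_sup_right)
  have h2 := ncard_le_two_of_subset_isCFlat hh hF hFV hxyz
    (Set.insert_subset hz (Set.pair_subset hx hy))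
  rw [Set.ncard_eq_three.mpr ⟨z, x, y, hzx, hzy, hxy, rfl⟩] at h2
  omega

theorem isSuperclique_of_isCFlat {F : Set L}
    (hF : IsCFlat {a : L | IsAtom a} (TLat L) F)
    (hline : ∀ x ∈ F, ∀ y ∈ F, x ≠ y → F ⊆ latxi L (x ⊔ y))
    {a b : L} (ha : a ∈ F) (hb : b ∈ F) (hab : a ≠ b) (htop : a ⊔ b = ⊤) :
    IsSuperclique L F := by
  have hadj : ∀ x ∈ F, ∀ y ∈ F, x ≠ y → AdjL L x y := fun x hx y hy hxy =>
    ⟨hF.1 hx, hF.1 hy, hxy, top_le_iff.mp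
      (htop ▸ sup_le (hline x hx y hy hxy ha).2 (hline x hx y hy hxy hb).2)⟩
  refine ⟨hF.1, (Set.one_lt_ncard).mpr ⟨a, ha, b, hb, hab⟩, hadj, fun x hx y hy hxy t ht => ?_⟩
  have htx : t ≠ x := fun h => ht.2 (h ▸ hx)
  have hty : t ≠ y := fun h => ht.2 (h ▸ hy)
  have hT : insert t {x, y} ∈ TLat L :=
    hF.2 _ (pair_mem_TLat (hF.1 hx) (hF.1 hy) hxy) (Set.pair_subset hx hy) t ht
  obtain ⟨u, hu, v, hv, huv, hne⟩ := exists_sup_ne_top_of_mem_TLat hT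
    (Set.ncard_eq_three.mpr ⟨t, x, y, htx, hty, hxy, rfl⟩).ge
  -- some two of `t, x, y` do not join to `⊤`, and `x ⊔ y = ⊤`, so one of the two is `t`
  by_contra! h
  have hxy' := (hadj x hx y hy hxy).2.2.2
  simp only [Set.mem_insert_iff, Set.mem_singleton_iff] at hu hv
  rcases hu with rfl | rfl | rfl <;> rcases hv with rfl | rfl | rfl <;>
    simp_all [AdjL, sup_comm]

theorem exists_eq_latxi_of_isCFlat (hh : hasHeight L 3) (hat : AtomisticLat L)
    (hsc : ¬ ∃ W : Set L, IsSuperclique L W) {F : Set L}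
    (hF : IsCFlat {a : L | IsAtom a} (TLat L) F) : ∃ x, F = latxi L x := by
  by_cases hFV : F = {a : L | IsAtom a}
  · exact ⟨⊤, hFV.trans (Set.ext fun a => (and_iff_left le_top).symm)⟩
  have hline := fun x (hx : x ∈ F) y (hy : y ∈ F) => subset_latxi_sup_of_isCFlat hh hF hFV hx hy
  obtain hsub | ⟨a, ha, b, hb, hab⟩ := F.subsingleton_or_nontrivial
  · obtain rfl | ⟨a, rfl⟩ := hsub.eq_empty_or_singleton
    exacts [⟨⊥, latxi_bot.symm⟩, ⟨a, (latxi_of_isAtom (hF.1 rfl)).symm⟩]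
  by_cases htop : a ⊔ b = ⊤
  · exact (hsc ⟨F, isSuperclique_of_isCFlat hF hline ha hb hab htop⟩).elim
  refine ⟨a ⊔ b, (hline a ha b hb hab).antisymm fun q hq => by_contra fun hqF => ?_⟩
  have hqa : q ≠ a := fun h => hqF (h ▸ ha)
  have hqb : q ≠ b := fun h => hqF (h ▸ hb)
  have h2 := ncard_le_two_of_subset_latxi hh hat
    (hF.2 _ (pair_mem_TLat (hF.1 ha) (hF.1 hb) hab) (Set.pair_subset ha hb) q ⟨hq.1, hqF⟩)
    (Set.insert_subset hq (Set.pair_subset ⟨hF.1 ha, le_sup_left⟩ ⟨hF.1 hb, le_sup_right⟩)) htop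
  rw [Set.ncard_eq_three.mpr ⟨q, a, b, hqa, hqb, hab, rfl⟩] at h2
  omega

theorem isCpx_TLat (hh : hasHeight L 3) : IsCpx {a : L | IsAtom a} (TLat L) := by
  obtain ⟨c, hc⟩ := hh.1
  have : Nontrivial L := ⟨⟨c 0, c 1, (hc (show (0 : Fin 4) < 1 by decide)).ne⟩⟩
  exact ⟨Set.toFinite _, IsAtomic.exists_atom L, ⟨∅, empty_mem_TLat⟩, fun _ => TLat_subset_atoms,
    fun _ hX _ hYX => mem_TLat_of_subset hX hYX⟩

theorem exists_boolRep_of_atomisticLat (hh : hasHeight L 3) (hat : AtomisticLat L)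
    (hsc : ¬ ∃ W : Set L, IsSuperclique L W) :
    ∃ (α : Type u) (V : Set α) (H : Set (Set α)), IsCpx V H ∧ BoolRep V H ∧
      Nonempty (L ≃o {F : Set α // IsCFlat V H F}) := by
  let f : L ↪o {F : Set L // IsCFlat {a : L | IsAtom a} (TLat L) F} :=
    OrderEmbedding.ofMapLEIff (fun x => ⟨latxi L x, isCFlat_latxi x⟩)
      fun _ _ => latxi_subset_latxi_iff hat
  refine ⟨L, _, _, isCpx_TLat hh, boolRep_TLat hat, ⟨OrderIso.ofSurjective f fun F => ?_⟩⟩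
  obtain ⟨x, hx⟩ := exists_eq_latxi_of_isCFlat hh hat hsc F.2
  exact ⟨x, Subtype.ext hx.symm⟩

end HeightThree

section Flats

variable {α : Type*} {V : Set α} {H : Set (Set α)}

def pointClosure (V : Set α) (H : Set (Set α)) (q : α) : Set α :=
  {v ∈ V | ∀ F, IsCFlat V H F → q ∈ F → v ∈ F}

theorem isCFlat_pointClosure (q : α) : IsCFlat V H (pointClosure V H q) := by
  refine ⟨fun _ hv => hv.1, fun I hI hIq p hp => ?_⟩
  obtain ⟨F, hF, hqF, hpF⟩ : ∃ F, IsCFlat V H F ∧ q ∈ F ∧ p ∉ F := by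
    by_contra! h
    exact hp.2 ⟨hp.1, h⟩
  exact hF.2 I hI (fun v hv => (hIq hv).2 F hF hqF) p ⟨hp.1, hpF⟩

theorem pointClosure_subset {F : Set α} (hF : IsCFlat V H F) {q : α} (hq : q ∈ F) :
    pointClosure V H q ⊆ F :=
  fun _ hv => hv.2 F hF hq

theorem mem_pointClosure {q : α} (hq : q ∈ V) : q ∈ pointClosure V H q :=
  ⟨hq, fun _ _ h => h⟩

variable {L : Type*} [PartialOrder L] (e : L ≃o {F : Set α // IsCFlat V H F})

noncomputable def cl (q : α) : L :=
  e.symm ⟨pointClosure V H q, isCFlat_pointClosure q⟩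

include e in
theorem exists_coe_eq {G : Set α} (hG : IsCFlat V H G) : ∃ y, (e y : Set α) = G :=
  ⟨e.symm ⟨G, hG⟩, by simp⟩

theorem cl_le_iff {q : α} (hq : q ∈ V) {y : L} : cl e q ≤ y ↔ q ∈ (e y : Set α) := by
  rw [cl, ← e.le_iff_le, e.apply_symm_apply]
  exact ⟨fun h => h (mem_pointClosure hq), pointClosure_subset (e y).2⟩

theorem mem_coe_cl {q : α} (hq : q ∈ V) : q ∈ (e (cl e q) : Set α) :=
  (cl_le_iff e hq).mp le_rfl

theorem cl_le_of_mem_coe {q : α} {y : L} (h : q ∈ (e y : Set α)) : cl e q ≤ y :=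
  (cl_le_iff e ((e y).2.1 h)).mpr h

theorem exists_mem_coe_diff_of_lt {x y : L} (h : x < y) :
    ∃ s ∈ (e y : Set α), s ∉ (e x : Set α) :=
  Set.exists_of_ssubset (e.strictMono h)

theorem exists_chain_of_boolRep (hbr : BoolRep V H) {X : Set α} (hX : X ∈ H) :
    ∃ (k : ℕ) (y : Fin (k + 1) → L) (x : Fin k → α), StrictMono y ∧ Function.Injective x ∧
      X = Set.range x ∧ ∀ i, x i ∈ (e (y i.succ) : Set α) \ e (y i.castSucc) := by
  obtain ⟨k, F, x, hF, hFmono, hx, rfl, hmem⟩ := hbr X hX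
  refine ⟨k, fun i => e.symm ⟨F i, hF i⟩, x, e.symm.strictMono.comp fun i j h => hFmono h, hx,
    rfl, fun i => ?_⟩
  simpa using hmem i

theorem injOn_cl (hbr : BoolRep V H) {X : Set α} (hX : X ∈ H) : X.InjOn (cl e) := by
  obtain ⟨k, y, x, hy, -, rfl, hmem⟩ := exists_chain_of_boolRep e hbr hX
  have hle : ∀ i j, i < j → cl e (x i) ≤ y j.castSucc := fun i j hij =>
    (cl_le_of_mem_coe e (hmem i).1).trans (hy.monotone (Fin.succ_le_castSucc_iff.mpr hij))
  have hne : ∀ i j, i < j → cl e (x i) ≠ cl e (x j) := fun i j hij h =>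
    (hmem j).2 ((cl_le_iff e ((e _).2.1 (hmem j).1)).mp (h ▸ hle i j hij))
  rintro _ ⟨i, rfl⟩ _ ⟨j, rfl⟩ h
  rcases lt_trichotomy i j with hij | rfl | hij
  exacts [(hne i j hij h).elim, rfl, (hne j i hij h.symm).elim]

variable [OrderBot L]

theorem singleton_mem_of_notMem_coe_bot (hcpx : IsCpx V H) {q : α} (hq : q ∈ V)
    (hq0 : q ∉ (e ⊥ : Set α)) : {q} ∈ H := by
  obtain ⟨X, hX⟩ := hcpx.2.2.1
  simpa using (e ⊥).2.2 ∅ (hcpx.2.2.2.2 X hX ∅ (Set.empty_subset X)) (Set.empty_subset _) q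
    ⟨hq, hq0⟩

theorem notMem_coe_bot_of_mem (hbr : BoolRep V H) {X : Set α} (hX : X ∈ H) {q : α}
    (hq : q ∈ X) : q ∉ (e ⊥ : Set α) := by
  obtain ⟨k, y, x, -, -, rfl, hmem⟩ := exists_chain_of_boolRep e hbr hX
  obtain ⟨i, rfl⟩ := hq
  exact fun h => (hmem i).2 (e.monotone bot_le h)

theorem isCFlat_coe_bot_union_fiber (hcpx : IsCpx V H) (hbr : BoolRep V H) (q : α) :
    IsCFlat V H ((e ⊥ : Set α) ∪ {q' ∈ V | cl e q' = cl e q}) := by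
  refine ⟨Set.union_subset (e ⊥).2.1 fun _ h => h.1, fun I hI hIF r hr => ?_⟩
  have hr0 : r ∉ (e ⊥ : Set α) := fun h => hr.2 (Or.inl h)
  have hfib : ∀ q' ∈ I, q' ∈ V ∧ cl e q' = cl e q := fun q' hq' =>
    (hIF hq').resolve_left (notMem_coe_bot_of_mem e hbr hI hq')
  have hsub : I.Subsingleton := fun a ha b hb =>
    injOn_cl e hbr hI ha hb ((hfib a ha).2.trans (hfib b hb).2.symm)
  obtain rfl | ⟨q₁, rfl⟩ := hsub.eq_empty_or_singleton
  · simpa using singleton_mem_of_notMem_coe_bot e hcpx hr.1 hr0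
  obtain ⟨hq₁, hq₁q⟩ := hfib q₁ rfl
  by_cases hrq₁ : r ∈ (e (cl e q₁) : Set α)
  · have hq₁r : q₁ ∉ (e (cl e r) : Set α) := fun h => hr.2 (Or.inr ⟨hr.1,
      (le_antisymm (cl_le_of_mem_coe e hrq₁) (cl_le_of_mem_coe e h)).trans hq₁q⟩)
    rw [Set.pair_comm]
    exact (e (cl e r)).2.2 {r} (singleton_mem_of_notMem_coe_bot e hcpx hr.1 hr0)
      (Set.singleton_subset_iff.mpr (mem_coe_cl e hr.1)) q₁ ⟨hq₁, hq₁r⟩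
  · exact (e (cl e q₁)).2.2 {q₁} hI
      (Set.singleton_subset_iff.mpr (mem_coe_cl e hq₁)) r ⟨hr.1, hrq₁⟩

theorem isAtom_cl (hcpx : IsCpx V H) (hbr : BoolRep V H) {q : α} (hq : q ∈ V)
    (hq0 : q ∉ (e ⊥ : Set α)) : IsAtom (cl e q) := by
  -- a point of `e b \ e ⊥` for `⊥ < b < cl e q` would lie in the flat
  -- `e ⊥ ∪ {q' | cl e q' = cl e q}`, which contains `q`, and so have closure `cl e q`
  refine ⟨fun h => hq0 ((cl_le_iff e hq).mp h.le), fun b hb => by_contra fun hb0 => ?_⟩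
  obtain ⟨s, hs, hs0⟩ := exists_mem_coe_diff_of_lt e (bot_lt_iff_ne_bot.mpr hb0)
  obtain ⟨y, hy⟩ := exists_coe_eq e (isCFlat_coe_bot_union_fiber e hcpx hbr q)
  have hqy : cl e q ≤ y := (cl_le_iff e hq).mpr (hy ▸ Or.inr ⟨hq, rfl⟩)
  have hsy : s ∈ (e y : Set α) := e.monotone (hb.le.trans hqy) hs
  rw [hy] at hsy
  obtain ⟨-, hsq⟩ := hsy.resolve_left hs0
  exact hb.not_ge (hsq ▸ cl_le_of_mem_coe e hs)

theorem cl_eq_of_mem_coe {w : L} (hw : IsAtom w) {q : α} (hq : q ∈ (e w : Set α))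
    (hq0 : q ∉ (e ⊥ : Set α)) : cl e q = w := by
  have hqV := (e w).2.1 hq
  exact (hw.le_iff_eq fun h => hq0 ((cl_le_iff e hqV).mp h.le)).mp (cl_le_of_mem_coe e hq)

end Flats

section Lattice

variable {L : Type*} [Lattice L] [BoundedOrder L]

theorem exists_isAtom_sup_ne_top [Finite L] (hh : hasHeight L 3) (hat : AtomisticLat L) :
    ∃ a b : L, IsAtom a ∧ IsAtom b ∧ a ≠ b ∧ a ⊔ b ≠ ⊤ := by
  obtain ⟨c, hc⟩ := hh.1
  have h01 : c 0 < c 1 := hc (by decide)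
  have h12 : c 1 < c 2 := hc (by decide)
  have h23 : c 2 < c 3 := hc (by decide)
  obtain ⟨a, ha, hac⟩ := (eq_bot_or_exists_atom_le (c 1)).resolve_left h01.ne_bot
  obtain ⟨s, hs, hcs⟩ := hat (c 2)
  obtain ⟨b, hb, hba⟩ : ∃ b ∈ s, ¬ b ≤ a := by
    by_contra! h
    exact h12.not_ge (hcs ▸ (Finset.sup_le h).trans hac)
  refine ⟨a, b, ha, hs b hb, fun h => hba (h ▸ le_rfl), fun htop => ?_⟩
  have hab : a ⊔ b ≤ c 2 := sup_le (hac.trans h12.le) (hcs ▸ Finset.le_sup (f := id) hb)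
  exact h23.not_ge (top_le_iff.mp (htop ▸ hab) ▸ le_top)

variable {α : Type*} {V : Set α} {H : Set (Set α)} (e : L ≃o {F : Set α // IsCFlat V H F})

theorem exists_cl_sup_ne_top (hbr : BoolRep V H) {X : Set α} (hX : X ∈ H) (h3 : 3 ≤ X.ncard) :
    ∃ q ∈ X, ∃ q' ∈ X, q ≠ q' ∧ cl e q ⊔ cl e q' ≠ ⊤ := by
  obtain ⟨k, y, x, hy, hx, rfl, hmem⟩ := exists_chain_of_boolRep e hbr hX
  rw [Set.ncard_range_of_injective hx, Nat.card_eq_fintype_card, Fintype.card_fin] at h3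
  have hle : ∀ i : Fin k, i.val < 2 → cl e (x i) ≤ y ⟨2, by omega⟩ := fun i hi =>
    (cl_le_of_mem_coe e (hmem i).1).trans (hy.monotone (by simp [Fin.le_def]; omega))
  refine ⟨x ⟨0, by omega⟩, ⟨_, rfl⟩, x ⟨1, by omega⟩, ⟨_, rfl⟩, hx.ne (by simp), fun htop => ?_⟩
  have h23 : y ⟨2, by omega⟩ < y ⟨3, by omega⟩ := hy (by simp [Fin.lt_def])
  exact h23.not_ge (top_le_iff.mp (htop ▸ sup_le (hle _ (by simp)) (hle _ (by simp))) ▸ le_top)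

include e in
theorem atomisticLat_of_orderIso [Fintype L] (hcpx : IsCpx V H) (hbr : BoolRep V H) :
    AtomisticLat L := by
  classical
  intro x
  refine ⟨Finset.univ.filter fun a => IsAtom a ∧ a ≤ x, fun a ha => (Finset.mem_filter.mp ha).2.1,
    le_antisymm ?_ (Finset.sup_le fun a ha => (Finset.mem_filter.mp ha).2.2)⟩
  refine e.le_iff_le.mp fun v (hv : v ∈ (e x : Set α)) => ?_
  by_cases hv0 : v ∈ (e ⊥ : Set α)
  · exact e.monotone bot_le hv0
  have hvV := (e x).2.1 hv
  exact (cl_le_iff e hvV).mp (Finset.le_sup (f := id) (Finset.mem_filter.mpr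
    ⟨Finset.mem_univ _, isAtom_cl e hcpx hbr hvV hv0, cl_le_of_mem_coe e hv⟩))

theorem insert_pair_mem_of_cl_sup_ne_top (hcpx : IsCpx V H) {q q' r : α} (hqq' : {q, q'} ∈ H) (hr : r ∈ V)
    (hrq : r ∉ (e (cl e q) : Set α)) (htop : cl e q ⊔ cl e q' = ⊤)
    (hrq_top : cl e r ⊔ cl e q ≠ ⊤) : insert r {q, q'} ∈ H := by
  have hqV : q ∈ V := hcpx.2.2.2.1 _ hqq' (by simp)
  have hq'V : q' ∈ V := hcpx.2.2.2.1 _ hqq' (by simp)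
  have hrq_mem : insert r {q} ∈ H :=
    (e (cl e q)).2.2 {q} (hcpx.2.2.2.2 _ hqq' {q} (by simp))
      (Set.singleton_subset_iff.mpr (mem_coe_cl e hqV)) r ⟨hr, hrq⟩
  have hq' : q' ∉ (e (cl e r ⊔ cl e q) : Set α) := fun h =>
    hrq_top (top_le_iff.mp (htop ▸ sup_le le_sup_right (cl_le_of_mem_coe e h)))
  have := (e (cl e r ⊔ cl e q)).2.2 _ hrq_mem (Set.insert_subset ((cl_le_iff e hr).mp le_sup_left)
    (Set.singleton_subset_iff.mpr ((cl_le_iff e hqV).mp le_sup_right))) q' ⟨hq'V, hq'⟩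
  rwa [Set.insert_comm, Set.pair_comm q'] at this

theorem isCFlat_biUnion_of_isSuperclique (hcpx : IsCpx V H) (hbr : BoolRep V H) {W : Set L}
    (hW : IsSuperclique L W) : IsCFlat V H (⋃ w ∈ W, (e w : Set α)) := by
  obtain ⟨hWat, hW2, hadj, hsc⟩ := hW
  refine ⟨Set.iUnion₂_subset fun w _ => (e w).2.1, fun I hI hIW r hr => ?_⟩
  have hclI : ∀ q ∈ I, cl e q ∈ W := fun q hq => by
    obtain ⟨w, hw, hqw⟩ := Set.mem_iUnion₂.mp (hIW hq)
    rwa [cl_eq_of_mem_coe e (hWat hw) hqw (notMem_coe_bot_of_mem e hbr hI hq)]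
  have hr0 : r ∉ (e ⊥ : Set α) := fun h => by
    obtain ⟨w, hw⟩ := Set.nonempty_of_ncard_ne_zero (by omega : W.ncard ≠ 0)
    exact hr.2 (Set.mem_iUnion₂.mpr ⟨w, hw, e.monotone bot_le h⟩)
  have hrW : cl e r ∉ W := fun h =>
    hr.2 (Set.mem_iUnion₂.mpr ⟨_, h, mem_coe_cl e hr.1⟩)
  have hrI : ∀ q ∈ I, r ∉ (e (cl e q) : Set α) := fun q hq h =>
    hrW (cl_eq_of_mem_coe e (hWat (hclI q hq)) h hr0 ▸ hclI q hq)
  have hadjI : ∀ q ∈ I, ∀ q' ∈ I, q ≠ q' → cl e q ⊔ cl e q' = ⊤ := fun q hq q' hq' hqq' =>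
    (hadj _ (hclI q hq) _ (hclI q' hq') ((injOn_cl e hbr hI).ne hq hq' hqq')).2.2.2
  rcases le_or_gt 3 I.ncard with h3 | h3
  · obtain ⟨q, hq, q', hq', hqq', htop⟩ := exists_cl_sup_ne_top e hbr hI h3
    exact (htop (hadjI q hq q' hq' hqq')).elim
  interval_cases hI_card : I.ncard
  · rw [(Set.ncard_eq_zero (hcpx.1.subset (hcpx.2.2.2.1 I hI))).mp hI_card]
    simpa using singleton_mem_of_notMem_coe_bot e hcpx hr.1 hr0
  · obtain ⟨q, rfl⟩ := Set.ncard_eq_one.mp hI_card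
    exact (e (cl e q)).2.2 {q} hI (Set.singleton_subset_iff.mpr
      (mem_coe_cl e (hcpx.2.2.2.1 _ hI rfl))) r ⟨hr.1, hrI q rfl⟩
  · obtain ⟨q, q', hqq', rfl⟩ := Set.ncard_eq_two.mp hI_card
    have hq : q ∈ ({q, q'} : Set α) := by simp
    have hq' : q' ∈ ({q, q'} : Set α) := by simp
    have hr_atom := isAtom_cl e hcpx hbr hr.1 hr0
    have hne : ∀ p ∈ ({q, q'} : Set α), ¬ AdjL L (cl e r) (cl e p) → cl e r ⊔ cl e p ≠ ⊤ :=
      fun p hp hna htop => hna ⟨hr_atom, hWat (hclI p hp), fun h => hrW (h ▸ hclI p hp), htop⟩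
    rcases hsc _ (hclI q hq) _ (hclI q' hq') ((injOn_cl e hbr hI).ne hq hq' hqq') (cl e r)
      ⟨hr_atom, hrW⟩ with hna | hna
    · exact insert_pair_mem_of_cl_sup_ne_top e hcpx hI hr.1 (hrI q hq) (hadjI q hq q' hq' hqq') (hne q hq hna)
    · rw [Set.pair_comm] at hI ⊢
      exact insert_pair_mem_of_cl_sup_ne_top e hcpx hI hr.1 (hrI q' hq') (hadjI q' hq' q hq hqq'.symm)
        (hne q' hq' hna)

include e in
theorem not_exists_isSuperclique_of_orderIso [Finite L] (hh : hasHeight L 3)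
    (hat : AtomisticLat L) (hcpx : IsCpx V H) (hbr : BoolRep V H) :
    ¬ ∃ W : Set L, IsSuperclique L W := by
  rintro ⟨W, hW⟩
  obtain ⟨a, b, ha, hb, hab, hne⟩ := exists_isAtom_sup_ne_top hh hat
  obtain ⟨t, ht, htW⟩ : ∃ t, IsAtom t ∧ t ∉ W := by
    by_contra! h
    exact hne (hW.2.2.1 a (h a ha) b (h b hb) hab).2.2.2
  obtain ⟨w₁, hw₁, w₂, hw₂, hw⟩ := (Set.one_lt_ncard).mp hW.2.1
  obtain ⟨u, hu⟩ := exists_coe_eq e (isCFlat_biUnion_of_isSuperclique e hcpx hbr hW)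
  have hle : ∀ w ∈ W, w ≤ u := fun w hw =>
    e.le_iff_le.mp fun v (hv : v ∈ (e w : Set α)) => hu ▸ Set.mem_iUnion₂.mpr ⟨w, hw, hv⟩
  have hu_top : u = ⊤ := top_le_iff.mp
    ((hW.2.2.1 _ hw₁ _ hw₂ hw).2.2.2 ▸ sup_le (hle _ hw₁) (hle _ hw₂))
  obtain ⟨s, hs, hs0⟩ := exists_mem_coe_diff_of_lt e ht.bot_lt
  have hsu : s ∈ (e u : Set α) := hu_top ▸ e.monotone le_top hs
  rw [hu] at hsu
  obtain ⟨w, hw, hsw⟩ := Set.mem_iUnion₂.mp hsu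
  exact htW (cl_eq_of_mem_coe e ht hs hs0 ▸ cl_eq_of_mem_coe e (hW.1 hw) hsw hs0 ▸ hw)

end Lattice

/-- A finite lattice `L` of height 3 is isomorphic to the lattice of flats of
some boolean representable finite simplicial complex if and only if `L` is
atomistic and the graph `Γ_L` has no supercliques. -/
theorem stmt18 (L : Type u) [Lattice L] [Fintype L] [BoundedOrder L]
    (hh : hasHeight L 3) :
    (∃ (α : Type u) (V : Set α) (H : Set (Set α)), IsCpx V H ∧ BoolRep V H ∧
        Nonempty (L ≃o {F : Set α // IsCFlat V H F})) ↔
    (AtomisticLat L ∧ ¬ ∃ W : Set L, IsSuperclique L W) := by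
  constructor
  · rintro ⟨α, V, H, hcpx, hbr, ⟨e⟩⟩
    have hat := atomisticLat_of_orderIso e hcpx hbr
    exact ⟨hat, not_exists_isSuperclique_of_orderIso e hh hat hcpx hbr⟩
  · rintro ⟨hat, hsc⟩
    exact exists_boolRep_of_atomisticLat hh hat hsc
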